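/- arXiv:1510.01152 — 3 statements merged into one kernel-verified Lean document; each statement's English description precedes it below -/
import Mathlib

section
/- The sum over k >= 1 of p_k^{(1)} equals 1, where p_k^{(1)} = 2^{-(k-1)} * integral from 0 to infinity of [x^{-1/2} e^{-x} Gamma(-1/2,x)^{k-1}] / [x^{-1/2} e^{-x} + gamma(1/2,x)]^k dx. -/
open Set MeasureTheory

/-- Upper incomplete gamma function. -/
noncomputable def Gup (ν x : ℝ) : ℝ := ∫ t in Ioi x, Real.exp (-t) * t ^ (ν - 1)

/-- Lower incomplete gamma function. -/
noncomputable def glow (ν x : ℝ) : ℝ := ∫ t in Ioc (0 : ℝ) x, Real.exp (-t) * t ^ (ν - 1)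

noncomputable def p1 (k : ℕ) : ℝ :=
  (1 / 2 ^ (k - 1)) * ∫ x in Ioi (0 : ℝ),
    (x ^ (-(1 / 2) : ℝ) * Real.exp (-x) * Gup (-(1 / 2)) x ^ (k - 1)) /
      (x ^ (-(1 / 2) : ℝ) * Real.exp (-x) + glow (1 / 2) x) ^ k

/-!
Integrating by parts, `Γ(1/2, x) = x^{-1/2} e^{-x} - Γ(-1/2, x)/2`; together with
`γ(1/2, x) + Γ(1/2, x) = Γ(1/2) = √π` this turns the denominator
`D(x) = x^{-1/2} e^{-x} + γ(1/2, x)` into `√π + Γ(-1/2, x)/2`. With `w = √π / D ∈ (0, 1]` the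
integrand of `p_{k+1}` becomes `(x^{-1/2} e^{-x} / √π) · w (1 - w)^k`, a geometric series in `k`
with sum `x^{-1/2} e^{-x} / √π`. Its terms are nonnegative, so sum and integral commute, and the
total is `Γ(1/2) / √π = 1`.
-/

open Real Filter Topology

theorem hasSum_integral_mul_mul_one_sub_pow {α : Type*} [MeasurableSpace α] {μ : Measure α}
    {g w : α → ℝ} (hg : Integrable g μ) (hg0 : 0 ≤ᵐ[μ] g) (hw : AEStronglyMeasurable w μ)
    (hw0 : ∀ᵐ x ∂μ, 0 < w x) (hw1 : ∀ᵐ x ∂μ, w x ≤ 1) :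
    HasSum (fun k : ℕ => ∫ x, g x * w x * (1 - w x) ^ k ∂μ) (∫ x, g x ∂μ) := by
  have hsum : ∀ᵐ x ∂μ, HasSum (fun k : ℕ => g x * w x * (1 - w x) ^ k) (g x) := by
    filter_upwards [hw0, hw1] with x h0 h1
    have := (hasSum_geometric_of_lt_one (sub_nonneg.2 h1) (sub_lt_self 1 h0)).mul_left (g x * w x)
    rwa [sub_sub_cancel, mul_assoc, mul_inv_cancel₀ h0.ne', mul_one] at this
  refine hasSum_integral_of_dominated_convergence (fun k x => g x * w x * (1 - w x) ^ k)
    (fun k => (hg.1.mul hw).mul ((aestronglyMeasurable_const.sub hw).pow k)) (fun k => ?_)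
    (hsum.mono fun x h => h.summable) (hg.congr (hsum.mono fun x h => h.tsum_eq.symm)) hsum
  filter_upwards [hg0, hw0, hw1] with x h h0 h1
  exact (Real.norm_of_nonneg (mul_nonneg (mul_nonneg h h0.le) (pow_nonneg (sub_nonneg.2 h1) k))).le

theorem integrableOn_exp_neg_mul_rpow_Ioi (ν : ℝ) {x : ℝ} (hx : 0 < x) :
    IntegrableOn (fun t => exp (-t) * t ^ ν) (Ioi x) := by
  refine integrable_of_isBigO_exp_neg one_half_pos (fun t ht => ?_) ?_
  · exact ((continuous_exp.comp continuous_neg).continuousAt.mul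
      (continuousAt_rpow_const _ _ (Or.inl (hx.trans_le ht).ne'))).continuousWithinAt
  · refine ((Asymptotics.isBigO_refl (fun t => exp (-t)) atTop).mul
      (isLittleO_rpow_exp_pos_mul_atTop ν one_half_pos).isBigO).congr_right fun t => ?_
    rw [← exp_add]
    congr 1
    ring

theorem Gup_add_one (ν : ℝ) {x : ℝ} (hx : 0 < x) :
    Gup (ν + 1) x = x ^ ν * exp (-x) + ν * Gup ν x := by
  have hderiv : ∀ t ∈ Ici x, HasDerivAt (fun t => -(t ^ ν * exp (-t)))
      (exp (-t) * t ^ ν - ν * (exp (-t) * t ^ (ν - 1))) t := by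
    intro t ht
    exact (((hasDerivAt_rpow_const (p := ν) (Or.inl (hx.trans_le ht).ne')).mul
      (hasDerivAt_neg t).exp).neg).congr_deriv (by ring)
  have hint₁ := integrableOn_exp_neg_mul_rpow_Ioi ν hx
  have hint₂ := (integrableOn_exp_neg_mul_rpow_Ioi (ν - 1) hx).const_mul ν
  have hlim : Tendsto (fun t => -(t ^ ν * exp (-t))) atTop (𝓝 0) := by
    simpa using (tendsto_rpow_mul_exp_neg_mul_atTop_nhds_zero ν 1 one_pos).neg
  have hFTC := integral_Ioi_of_hasDerivAt_of_tendsto' hderiv (hint₁.sub hint₂) hlim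
  rw [integral_sub hint₁ hint₂, integral_const_mul] at hFTC
  rw [Gup, Gup, add_sub_cancel_right]
  linarith

theorem glow_add_Gup {ν x : ℝ} (hν : 0 < ν) (hx : 0 ≤ x) : glow ν x + Gup ν x = Gamma ν := by
  have hint := GammaIntegral_convergent hν
  rw [Gamma_eq_integral hν, ← Ioc_union_Ioi_eq_Ioi hx, setIntegral_union (Ioc_disjoint_Ioi le_rfl)
    measurableSet_Ioi (hint.mono_set Ioc_subset_Ioi_self) (hint.mono_set (Ioi_subset_Ioi hx))]
  rfl

theorem glow_monotone {ν : ℝ} (hν : 0 < ν) : Monotone (glow ν) := fun a b hab =>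
  setIntegral_mono_set ((GammaIntegral_convergent hν).mono_set Ioc_subset_Ioi_self)
    ((ae_restrict_mem measurableSet_Ioc).mono fun t ht => by have := ht.1.le; positivity)
    (Ioc_subset_Ioc_right hab).eventuallyLE

theorem Gup_nonneg (ν : ℝ) {x : ℝ} (hx : 0 ≤ x) : 0 ≤ Gup ν x :=
  setIntegral_nonneg measurableSet_Ioi fun t ht => by have := (hx.trans_lt ht).le; positivity

theorem integrableOn_rpow_neg_half_mul_exp_neg :
    IntegrableOn (fun x : ℝ => x ^ (-(1 / 2) : ℝ) * exp (-x)) (Ioi 0) := by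
  simpa using integrableOn_rpow_mul_exp_neg_rpow (s := -(1 / 2)) (by norm_num) one_pos

theorem integral_rpow_neg_half_mul_exp_neg :
    ∫ x in Ioi 0, x ^ (-(1 / 2) : ℝ) * exp (-x) = √π := by
  have h := integral_rpow_mul_exp_neg_rpow (q := -(1 / 2)) one_pos (by norm_num)
  norm_num [Gamma_one_half_eq] at h
  exact h

noncomputable def p1Denom (x : ℝ) : ℝ := x ^ (-(1 / 2) : ℝ) * exp (-x) + glow (1 / 2) x

theorem measurable_p1Denom : Measurable p1Denom :=
  (by fun_prop : Measurable fun x : ℝ => x ^ (-(1 / 2) : ℝ) * exp (-x)).add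
    (glow_monotone one_half_pos).measurable

theorem p1Denom_eq {x : ℝ} (hx : 0 < x) : p1Denom x = √π + Gup (-(1 / 2)) x / 2 := by
  have hrec := Gup_add_one (-(1 / 2)) hx
  have hsplit := glow_add_Gup one_half_pos hx.le
  rw [show -(1 / 2 : ℝ) + 1 = 1 / 2 by norm_num] at hrec
  rw [Gamma_one_half_eq] at hsplit
  rw [p1Denom]
  linarith

theorem sqrt_pi_le_p1Denom {x : ℝ} (hx : 0 < x) : √π ≤ p1Denom x := by
  rw [p1Denom_eq hx]
  linarith [Gup_nonneg (-(1 / 2)) hx.le]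

theorem p1_succ_eq (k : ℕ) :
    p1 (k + 1) = ∫ x in Ioi 0,
      x ^ (-(1 / 2) : ℝ) * exp (-x) / √π * (√π / p1Denom x) * (1 - √π / p1Denom x) ^ k := by
  rw [p1, Nat.add_sub_cancel, ← integral_const_mul]
  refine setIntegral_congr_fun measurableSet_Ioi fun x hx => ?_
  have hpi : 0 < √π := sqrt_pos.2 pi_pos
  have hD : p1Denom x ≠ 0 := (hpi.trans_le (sqrt_pi_le_p1Denom hx)).ne'
  have hG : Gup (-(1 / 2)) x = 2 * (p1Denom x - √π) := by linarith [p1Denom_eq hx]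
  rw [← p1Denom, hG, one_sub_div hD, div_pow, mul_pow]
  field_simp
  ring

theorem sum_p1 : ∑' k : ℕ, p1 (k + 1) = 1 := by
  have hpi : 0 < √π := sqrt_pos.2 pi_pos
  have hD : ∀ᵐ x ∂volume.restrict (Ioi 0), √π ≤ p1Denom x :=
    (ae_restrict_mem measurableSet_Ioi).mono fun x hx => sqrt_pi_le_p1Denom hx
  have hsum := hasSum_integral_mul_mul_one_sub_pow
    (integrableOn_rpow_neg_half_mul_exp_neg.div_const √π)
    ((ae_restrict_mem measurableSet_Ioi).mono fun x hx => by have : (0 : ℝ) < x := hx; positivity)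
    (measurable_p1Denom.const_div √π).aestronglyMeasurable
    (hD.mono fun x hx => div_pos hpi (hpi.trans_le hx))
    (hD.mono fun x hx => div_le_one_of_le₀ hx (hpi.le.trans hx))
  rw [integral_div, integral_rpow_neg_half_mul_exp_neg, div_self hpi.ne'] at hsum
  simpa only [p1_succ_eq] using hsum.tsum_eq
end

section
/- For a random walk with i.i.d. continuous symmetric step distribution, the probability that no record occurs in the first k steps is q(k) = binomial(2k,k)/4^k; i.e., P(max(X_1,...,X_k) < X_0) = binomial(2k,k)/4^k for all k >= 1 (Sparre Andersen theorem). -/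
/-!
Let `q n` be the probability that the walk stays negative during its first `n` steps. Sort the
paths of length `n` by the time `m` at which `S 0, …, S n` is maximal; by absolute continuity this
time is a.s. unique. The event that it equals `m` splits into two independent conditions: the
first `m` increments, reversed and negated, keep their partial sums negative, and so do the next
`n - m` increments. By symmetry and exchangeability both have the law of the original walk, so
`∑ m ≤ n, q m * q (n - m) = 1`. Hence the generating function of `q` squares to `1 / (1 - X)`, as
does `(1 - X) ^ (-1/2) = ∑ centralBinom n / 4 ^ n * X ^ n`, and a power series is determined by its
square and its (nonzero) constant term.
-/

open MeasureTheory ProbabilityTheory Finset PowerSeries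

theorem Ring.succ_nsmul_choose_succ {R : Type*} [CommRing R] [BinomialRing R] (r : R) (n : ℕ) :
    (n + 1) • Ring.choose r (n + 1) = Ring.choose r n * (r - n) := by
  simpa [Nat.choose_succ_self_right, Ring.choose_one_right] using
    Ring.choose_smul_choose r (Nat.le_succ n)

theorem Ring.choose_neg_one {R : Type*} [CommRing R] [BinomialRing R] (n : ℕ) :
    Ring.choose (-1 : R) n = (-1) ^ n := by
  rw [Ring.choose_neg', Ring.multichoose_one, Units.smul_def, zsmul_one, Int.coe_negOnePow_natCast,
    Int.cast_pow, Int.cast_neg, Int.cast_one]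

section CentralBinom

variable {K : Type*} [Field K] [CharZero K]

theorem Ring.choose_neg_half (n : ℕ) :
    Ring.choose (-2⁻¹ : K) n = (-1) ^ n * n.centralBinom / 4 ^ n := by
  induction n with
  | zero => simp
  | succ n ih =>
    have hc : ((n + 1 : ℕ) : K) * (n + 1).centralBinom = 2 * (2 * n + 1) * n.centralBinom := by
      exact_mod_cast Nat.succ_mul_centralBinom_succ n
    have h := Ring.succ_nsmul_choose_succ (-2⁻¹ : K) n
    rw [← Nat.cast_smul_eq_nsmul K, smul_eq_mul, ih] at h
    refine mul_left_cancel₀ (Nat.cast_add_one_ne_zero n) ?_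
    push_cast at h hc
    rw [h]
    linear_combination ((-1) ^ n / (4 * 4 ^ n) : K) * hc

theorem sq_mk_centralBinom_div :
    (PowerSeries.mk fun n => (n.centralBinom : K) / 4 ^ n) ^ 2 = PowerSeries.mk 1 := by
  have h : (PowerSeries.mk fun n => (n.centralBinom : K) / 4 ^ n) =
      rescale (-1) (binomialSeries K (-2⁻¹ : K)) := by
    ext n
    rw [coeff_mk, coeff_rescale, binomialSeries_coeff, smul_eq_mul, mul_one, Ring.choose_neg_half]
    simp [← mul_assoc, ← mul_pow, mul_div_assoc]
  rw [h, ← map_pow, sq, ← binomialSeries_add]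
  ext n
  rw [coeff_rescale, binomialSeries_coeff, coeff_mk]
  norm_num [Ring.choose_neg_one, ← mul_pow]

end CentralBinom

theorem PowerSeries.eq_of_sq_eq {R : Type*} [CommRing R] [IsDomain R] [CharZero R] {f g : R⟦X⟧}
    (h : f ^ 2 = g ^ 2) (h0 : constantCoeff f = constantCoeff g) (hf : constantCoeff f ≠ 0) :
    f = g := by
  refine (sq_eq_sq_iff_eq_or_eq_neg.1 h).resolve_right fun hneg => hf (self_eq_neg.1 ?_)
  simpa [h0] using congrArg constantCoeff hneg

def staysNegative (n : ℕ) : Set (ℕ → ℝ) :=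
  {x | ∀ i, 1 ≤ i → i ≤ n → ∑ j ∈ range i, x j < 0}

/-- Since `∑ l ∈ Ico i m, x l = S m - S i` for the partial sums `S i = ∑ j ∈ range i, x j`, these
two sets say that `S m` is strictly larger than `S i` for `i < m`, resp. for `m < i ≤ n`. -/
def strictMaxBefore (m : ℕ) : Set (ℕ → ℝ) :=
  {x | ∀ i, i < m → 0 < ∑ l ∈ Ico i m, x l}

def strictMaxAfter (m n : ℕ) : Set (ℕ → ℝ) :=
  {x | ∀ j, m < j → j ≤ n → ∑ l ∈ Ico m j, x l < 0}

/-- Reverses `0, …, m - 1` and fixes the rest; being injective, it keeps i.i.d. sequences i.i.d. -/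
def reflectBelow (m j : ℕ) : ℕ := if j < m then m - 1 - j else j

lemma reflectBelow_injective (m : ℕ) : Function.Injective (reflectBelow m) := by
  intro a b h
  simp only [reflectBelow] at h
  split_ifs at h <;> omega

lemma staysNegative_zero : staysNegative 0 = Set.univ :=
  Set.eq_univ_of_forall fun _ _ h₁ h₂ => absurd (h₁.trans h₂) (by omega)

lemma measurableSet_staysNegative (n : ℕ) : MeasurableSet (staysNegative n) := by
  unfold staysNegative; measurability

lemma sum_range_reflect_eq_sum_Ico {M : Type*} [AddCommMonoid M] (f : ℕ → M) {i m : ℕ}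
    (h : i ≤ m) :
    ∑ j ∈ range i, f (m - 1 - j) = ∑ l ∈ Ico (m - i) m, f l := by
  refine sum_nbij' (fun j => m - 1 - j) (fun l => m - 1 - l) ?_ ?_ ?_ ?_ ?_ <;>
    intro a ha <;> simp only [mem_range, mem_Ico] at * <;> omega

lemma neg_reflect_mem_staysNegative_iff {x : ℕ → ℝ} {m : ℕ} :
    (fun j => -x (reflectBelow m j)) ∈ staysNegative m ↔ x ∈ strictMaxBefore m := by
  have hsum : ∀ i ≤ m, ∑ j ∈ range i, -x (reflectBelow m j) = -∑ l ∈ Ico (m - i) m, x l := by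
    intro i hi
    rw [← sum_range_reflect_eq_sum_Ico x hi, ← sum_neg_distrib]
    refine sum_congr rfl fun j hj => ?_
    rw [reflectBelow, if_pos (by simp at hj; omega)]
  simp only [staysNegative, strictMaxBefore, Set.mem_ofPred_eq]
  constructor
  · intro h i hi
    have := h (m - i) (by omega) (by omega)
    rwa [hsum _ (by omega), Nat.sub_sub_self hi.le, neg_lt_zero] at this
  · intro h i hi₁ hi₂
    rw [hsum i hi₂, neg_lt_zero]
    exact h _ (by omega)

lemma shift_mem_staysNegative_iff {x : ℕ → ℝ} {m n : ℕ} :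
    (fun j => x (m + j)) ∈ staysNegative (n - m) ↔ x ∈ strictMaxAfter m n := by
  simp only [staysNegative, strictMaxAfter, Set.mem_ofPred_eq]
  constructor
  · intro h j hj₁ hj₂
    have := h (j - m) (by omega) (by omega)
    rwa [← sum_Ico_eq_sum_range (fun l => x l)] at this
  · intro h i hi₁ hi₂
    rw [show i = m + i - m by omega, ← sum_Ico_eq_sum_range (fun l => x l)]
    exact h _ (by omega) (by omega)

lemma pairwiseDisjoint_strictMax (n : ℕ) :
    (range (n + 1) : Set ℕ).PairwiseDisjoint fun m => strictMaxBefore m ∩ strictMaxAfter m n := by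
  have key : ∀ a b, a < b → b ≤ n →
      Disjoint (strictMaxBefore a ∩ strictMaxAfter a n) (strictMaxBefore b ∩ strictMaxAfter b n) :=
    fun a b hab hb => Set.disjoint_left.2 fun x ha hb' => (ha.2 b hab hb).not_gt (hb'.1 a hab)
  intro a ha b hb hab
  simp only [coe_range, Set.mem_Iio] at ha hb
  rcases hab.lt_or_gt with h | h
  · exact key a b h (by omega)
  · exact (key b a h (by omega)).symm

lemma exists_mem_strictMax {x : ℕ → ℝ} (hx : Function.Injective fun i => ∑ j ∈ range i, x j)
    (n : ℕ) : ∃ m ∈ range (n + 1), x ∈ strictMaxBefore m ∩ strictMaxAfter m n := by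
  obtain ⟨m, hm, hmax⟩ :=
    exists_max_image (range (n + 1)) (fun i => ∑ j ∈ range i, x j) ⟨0, by simp⟩
  have hlt : ∀ i ∈ range (n + 1), i ≠ m → ∑ j ∈ range i, x j < ∑ j ∈ range m, x j :=
    fun i hi him => (hmax i hi).lt_of_ne fun h => him (hx h)
  simp only [mem_range] at hm hlt
  refine ⟨m, mem_range.2 hm, fun i hi => ?_, fun j hj₁ hj₂ => ?_⟩
  · rw [sum_Ico_eq_sub _ hi.le, sub_pos]
    exact hlt i (by omega) hi.ne
  · rw [sum_Ico_eq_sub _ hj₁.le, sub_neg]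
    exact hlt j (by omega) hj₁.ne'

section RandomWalk

variable {Ω : Type*} [MeasurableSpace Ω] {P : Measure Ω} {μ : Measure ℝ} {η : ℕ → Ω → ℝ}

lemma measure_preimage_comp_seq [IsProbabilityMeasure μ] (hmeas : ∀ i, Measurable (η i))
    (hindep : iIndepFun η P) (hlaw : ∀ i, P.map (η i) = μ) {ι : ℕ → ℕ}
    (hι : Function.Injective ι) {g : ℝ → ℝ} (hg : Measurable g) (hgμ : μ.map g = μ)
    {s : Set (ℕ → ℝ)} (hs : MeasurableSet s) :
    P ((fun ω j => g (η (ι j) ω)) ⁻¹' s) = Measure.infinitePi (fun _ => μ) s := by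
  have hind : iIndepFun (fun j ω => g (η (ι j) ω)) P :=
    (hindep.precomp hι).comp (fun _ => g) fun _ => hg
  have hcomp : ∀ j, Measurable fun ω => g (η (ι j) ω) := fun j => hg.comp (hmeas _)
  rw [← Measure.map_apply (measurable_pi_lambda _ hcomp) hs,
    hind.map_fun_eq_infinitePi_map hcomp]
  congr with j : 1
  exact (Measure.map_map hg (hmeas _)).symm.trans (by rw [hlaw, hgμ])

lemma measure_strictMax [IsProbabilityMeasure μ] (hmeas : ∀ i, Measurable (η i))
    (hindep : iIndepFun η P) (hlaw : ∀ i, P.map (η i) = μ) (hsymm : μ.map Neg.neg = μ) (m n : ℕ) :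
    P ((fun ω i => η i ω) ⁻¹' (strictMaxBefore m ∩ strictMaxAfter m n)) =
      Measure.infinitePi (fun _ => μ) (staysNegative m) *
        Measure.infinitePi (fun _ => μ) (staysNegative (n - m)) := by
  have hindep_blocks := indep_iSup_of_disjoint (fun i => (hmeas i).comap_le) hindep.iIndep
    (Set.Iio_disjoint_Ici le_rfl : Disjoint (Set.Iio m) (Set.Ici m))
  have hmeas_sup : ∀ {s : Set ℕ} {l}, l ∈ s →
      Measurable[⨆ i ∈ s, MeasurableSpace.comap (η i) inferInstance] (η l) := fun {s} l hl =>
    measurable_iff_comap_le.2 <|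
      le_iSup₂ (f := fun i (_ : i ∈ s) => MeasurableSpace.comap (η i) _) l hl
  rw [Set.preimage_inter, (Indep_iff _ _ _).1 hindep_blocks]
  · congr 1
    · rw [← measure_preimage_comp_seq hmeas hindep hlaw (reflectBelow_injective m) measurable_neg
        hsymm (measurableSet_staysNegative m)]
      exact congrArg P (Set.ext fun ω => neg_reflect_mem_staysNegative_iff.symm)
    · rw [← measure_preimage_comp_seq hmeas hindep hlaw (add_right_injective m) measurable_id
        Measure.map_id (measurableSet_staysNegative _)]
      exact congrArg P (Set.ext fun ω => shift_mem_staysNegative_iff.symm)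
  · simp only [strictMaxBefore, Set.ofPred_forall, Set.preimage_iInter, Set.preimage_ofPred_eq]
    refine MeasurableSet.iInter fun i => MeasurableSet.iInter fun _ => ?_
    exact measurableSet_lt measurable_const
      (Finset.measurable_sum _ fun l hl => hmeas_sup (Set.mem_Iio.2 (mem_Ico.1 hl).2))
  · simp only [strictMaxAfter, Set.ofPred_forall, Set.preimage_iInter, Set.preimage_ofPred_eq]
    refine MeasurableSet.iInter fun j =>
      MeasurableSet.iInter fun _ => MeasurableSet.iInter fun _ => ?_
    exact measurableSet_lt
      (Finset.measurable_sum _ fun l hl => hmeas_sup (Set.mem_Ici.2 (mem_Ico.1 hl).1))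
      measurable_const

lemma map_sum_absolutelyContinuous [IsProbabilityMeasure P] [IsProbabilityMeasure μ]
    (hmeas : ∀ i, Measurable (η i)) (hindep : iIndepFun η P) (hlaw : ∀ i, P.map (η i) = μ)
    (hcont : μ ≪ volume) {s : Finset ℕ} (hs : s.Nonempty) :
    P.map (∑ l ∈ s, η l) ≪ volume := by
  obtain ⟨i, hi⟩ := hs
  have hindep_i := hindep.indepFun_finsetSum_of_notMem hmeas (notMem_erase i s)
  rw [← sum_erase_add _ _ hi, hindep_i.map_add_eq_map_conv_map (by fun_prop) (hmeas i), hlaw i]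
  exact Measure.conv_absolutelyContinuous hcont

lemma ae_injective_partialSum [IsProbabilityMeasure P] [IsProbabilityMeasure μ]
    (hmeas : ∀ i, Measurable (η i)) (hindep : iIndepFun η P) (hlaw : ∀ i, P.map (η i) = μ)
    (hcont : μ ≪ volume) :
    ∀ᵐ ω ∂P, Function.Injective fun n => ∑ i ∈ range n, η i ω := by
  have hne : ∀ i j, i < j → ∀ᵐ ω ∂P, ∑ l ∈ Ico i j, η l ω ≠ 0 := by
    intro i j hij
    have hnull := map_sum_absolutelyContinuous hmeas hindep hlaw hcont (nonempty_Ico.2 hij)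
      (Real.volume_singleton (a := 0))
    rw [Measure.map_apply (by fun_prop) (measurableSet_singleton 0)] at hnull
    rw [ae_iff]
    simpa [Set.preimage, Finset.sum_apply] using hnull
  have hall : ∀ᵐ ω ∂P, ∀ i j, i < j → ∑ l ∈ Ico i j, η l ω ≠ 0 :=
    ae_all_iff.2 fun i => ae_all_iff.2 fun j => by
      by_cases hij : i < j
      · exact (hne i j hij).mono fun ω hω _ => hω
      · exact Filter.Eventually.of_forall fun ω h => absurd h hij
  filter_upwards [hall] with ω hω a b hab
  by_contra h
  rcases Nat.lt_or_gt_of_ne h with h | h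
  · exact hω a b h (by rw [sum_Ico_eq_sub _ h.le]; simp [hab])
  · exact hω b a h (by rw [sum_Ico_eq_sub _ h.le]; simp [hab])

lemma sum_measure_staysNegative_mul [IsProbabilityMeasure P] [IsProbabilityMeasure μ]
    (hmeas : ∀ i, Measurable (η i)) (hindep : iIndepFun η P) (hlaw : ∀ i, P.map (η i) = μ)
    (hsymm : μ.map Neg.neg = μ) (hcont : μ ≪ volume) (n : ℕ) :
    ∑ m ∈ range (n + 1), Measure.infinitePi (fun _ => μ) (staysNegative m) *
      Measure.infinitePi (fun _ => μ) (staysNegative (n - m)) = 1 := by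
  set E : ℕ → Set Ω := fun m => (fun ω i => η i ω) ⁻¹' (strictMaxBefore m ∩ strictMaxAfter m n)
  have hE_meas : ∀ m, MeasurableSet (E m) := fun m =>
    measurable_pi_lambda _ hmeas (by simp only [strictMaxBefore, strictMaxAfter]; measurability)
  have hcover : ∀ᵐ ω ∂P, ω ∈ ⋃ m ∈ range (n + 1), E m :=
    (ae_injective_partialSum hmeas hindep hlaw hcont).mono fun ω hω => by
      obtain ⟨m, hm, hx⟩ := exists_mem_strictMax hω n
      exact Set.mem_iUnion₂.2 ⟨m, hm, hx⟩
  have hdisj : (range (n + 1) : Set ℕ).PairwiseDisjoint E := fun a ha b hb hab =>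
    (pairwiseDisjoint_strictMax n ha hb hab).preimage _
  rw [ae_mem_iff_measure_eq (measurableSet_biUnion _ fun m _ => hE_meas m).nullMeasurableSet,
    measure_univ, measure_biUnion_finset hdisj fun m _ => hE_meas m] at hcover
  rw [← hcover]
  exact sum_congr rfl fun m _ => (measure_strictMax hmeas hindep hlaw hsymm m n).symm

lemma sq_mk_toReal_measure_staysNegative [IsProbabilityMeasure P] [IsProbabilityMeasure μ]
    (hmeas : ∀ i, Measurable (η i)) (hindep : iIndepFun η P) (hlaw : ∀ i, P.map (η i) = μ)
    (hsymm : μ.map Neg.neg = μ) (hcont : μ ≪ volume) :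
    (PowerSeries.mk fun n => (Measure.infinitePi (fun _ => μ) (staysNegative n)).toReal) ^ 2 =
      PowerSeries.mk 1 := by
  ext n
  rw [sq, coeff_mul, Nat.sum_antidiagonal_eq_sum_range_succ_mk, coeff_mk, Pi.one_apply,
    ← ENNReal.toReal_one, ← sum_measure_staysNegative_mul hmeas hindep hlaw hsymm hcont n,
    ENNReal.toReal_sum fun _ _ => ENNReal.mul_ne_top (measure_ne_top _ _) (measure_ne_top _ _)]
  simp only [coeff_mk, ENNReal.toReal_mul]

end RandomWalk

theorem sparre_andersen_general
    {Ω : Type*} [MeasureSpace Ω] [IsProbabilityMeasure (ℙ : Measure Ω)]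
    (η : ℕ → Ω → ℝ)
    (hmeas : ∀ i, Measurable (η i))
    (hindep : iIndepFun η ℙ)
    (hident : ∀ i, IdentDistrib (η i) (η 0) ℙ ℙ)
    (hsymm : Measure.map (fun ω => -(η 0 ω)) ℙ = Measure.map (η 0) ℙ)
    (hcont : Measure.map (η 0) ℙ ≪ (volume : Measure ℝ))
    (X : ℕ → Ω → ℝ) (hX : ∀ n ω, X n ω = ∑ i ∈ Finset.range n, η i ω)
    (k : ℕ) :
    ℙ {ω | ∀ i, 1 ≤ i → i ≤ k → X i ω < X 0 ω}
      = ENNReal.ofReal ((Nat.choose (2 * k) k : ℝ) / 4 ^ k) := by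
  set μ := (ℙ : Measure Ω).map (η 0)
  have : IsProbabilityMeasure μ := Measure.isProbabilityMeasure_map (hmeas 0).aemeasurable
  have hlaw : ∀ i, (ℙ : Measure Ω).map (η i) = μ := fun i => (hident i).map_eq
  have hsymm_μ : μ.map Neg.neg = μ := (Measure.map_map measurable_neg (hmeas 0)).trans hsymm
  have hseries := PowerSeries.eq_of_sq_eq
    ((sq_mk_toReal_measure_staysNegative hmeas hindep hlaw hsymm_μ hcont).trans
      sq_mk_centralBinom_div.symm)
    (by simp [staysNegative_zero]) (by simp [staysNegative_zero])
  have hcoeff := congrArg (coeff k) hseries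
  rw [coeff_mk, coeff_mk] at hcoeff
  have hevent : {ω | ∀ i, 1 ≤ i → i ≤ k → X i ω < X 0 ω} =
      (fun ω j => η j ω) ⁻¹' staysNegative k := by
    ext ω
    simp [staysNegative, hX]
  have hprob : ℙ ((fun ω j => η j ω) ⁻¹' staysNegative k) =
      Measure.infinitePi (fun _ => μ) (staysNegative k) :=
    measure_preimage_comp_seq hmeas hindep hlaw Function.injective_id measurable_id Measure.map_id
      (measurableSet_staysNegative k)
  rw [hevent, hprob, ← Nat.centralBinom_eq_two_mul_choose, ← hcoeff,
    ENNReal.ofReal_toReal (measure_ne_top _ _)]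

theorem sparre_andersen
    {Ω : Type*} [MeasureSpace Ω] [IsProbabilityMeasure (ℙ : Measure Ω)]
    (η : ℕ → Ω → ℝ)
    (hmeas : ∀ i, Measurable (η i))
    (hindep : iIndepFun η ℙ)
    (hident : ∀ i, IdentDistrib (η i) (η 0) ℙ ℙ)
    (hsymm : Measure.map (fun ω => -(η 0 ω)) ℙ = Measure.map (η 0) ℙ)
    (hcont : Measure.map (η 0) ℙ ≪ (volume : Measure ℝ))
    (X : ℕ → Ω → ℝ) (hX : ∀ n ω, X n ω = ∑ i ∈ Finset.range n, η i ω)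
    (k : ℕ) (hk : 1 ≤ k) :
    ℙ {ω | ∀ i, 1 ≤ i → i ≤ k → X i ω < X 0 ω}
      = ENNReal.ofReal ((Nat.choose (2 * k) k : ℝ) / 4 ^ k) :=
  sparre_andersen_general η hmeas hindep hident hsymm hcont X hX k
end

section
/- Suppose the nonnegative sequence p(n) satisfies sum_{n>=0} p(n) e^{-sn} ~ p/s as s -> 0+ for a constant p > 0, and set S(n) = sum_{j=0}^{n} p(j). Then S(n)/n converges to p as n -> infinity. -/
/-!
Karamata's proof. Write `Λₛ g = s ∑ₙ pₙ e^{-sn} g(e^{-sn})`, so the hypothesis is `Λₛ 1 → P`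
as `s → 0⁺`. Replacing `s` by `(k + 1) s` gives `Λₛ tᵏ → P / (k + 1) = P ∫₀¹ tᵏ dt`, hence
`Λₛ g → P ∫₀¹ g` for every polynomial `g` by linearity. Since `p ≥ 0`, `Λₛ` is monotone in `g`,
so squeezing between polynomials `q ± η` extends this to continuous `g` (Weierstrass), and
squeezing between continuous functions extends it to `g = t⁻¹ 𝟙[e⁻¹, 1]`, whose integral is `1`.
Finally `Λ_{1/n} g = S(n) / n`.
-/

open Filter Set Topology Polynomial

theorem tendsto_of_squeeze_family {α ι β : Type*} [TopologicalSpace β] [LinearOrder β]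
    [OrderTopology β] {l : Filter α} {l' : Filter ι} [l'.NeBot] {f : α → β}
    {u v : ι → α → β} {a b : ι → β} {c : β}
    (hu : ∀ᶠ i in l', Tendsto (u i) l (𝓝 (a i))) (hv : ∀ᶠ i in l', Tendsto (v i) l (𝓝 (b i)))
    (ha : Tendsto a l' (𝓝 c)) (hb : Tendsto b l' (𝓝 c))
    (huf : ∀ᶠ i in l', ∀ᶠ x in l, u i x ≤ f x) (hfv : ∀ᶠ i in l', ∀ᶠ x in l, f x ≤ v i x) :
    Tendsto f l (𝓝 c) := by
  refine tendsto_order.2 ⟨fun c' hc' => ?_, fun c' hc' => ?_⟩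
  · obtain ⟨i, hui, hufi, hai⟩ := (hu.and (huf.and (ha.eventually (lt_mem_nhds hc')))).exists
    filter_upwards [hui.eventually (lt_mem_nhds hai), hufi] with x hlt hle using hlt.trans_le hle
  · obtain ⟨i, hvi, hfvi, hbi⟩ := (hv.and (hfv.and (hb.eventually (gt_mem_nhds hc')))).exists
    filter_upwards [hvi.eventually (gt_mem_nhds hbi), hfvi] with x hlt hle using hle.trans_lt hlt

theorem norm_indicator_Ici_inv_le {c : ℝ} (hc : 0 < c) (t : ℝ) :
    ‖(Ici c).indicator (·⁻¹) t‖ ≤ c⁻¹ := by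
  by_cases ht : t ∈ Ici c
  · rw [indicator_of_mem ht, Real.norm_eq_abs, abs_of_pos (inv_pos.2 (hc.trans_le ht))]
    exact inv_anti₀ hc ht
  · rw [indicator_of_notMem ht, norm_zero]
    exact (inv_pos.2 hc).le

noncomputable def cutoffInv (a δ t : ℝ) : ℝ := max 0 (min 1 ((t - a) / δ)) / max t a

section CutoffInv

variable {a δ t : ℝ}

theorem continuous_cutoffInv (ha : 0 < a) : Continuous (cutoffInv a δ) :=
  Continuous.div (by fun_prop) (by fun_prop) fun t => (ha.trans_le (le_max_right t a)).ne'

theorem cutoffInv_of_le (hδ : 0 ≤ δ) (ht : t ≤ a) : cutoffInv a δ t = 0 := by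
  have : (t - a) / δ ≤ 0 := div_nonpos_of_nonpos_of_nonneg (sub_nonpos.2 ht) hδ
  rw [cutoffInv, max_eq_left ((min_le_right _ _).trans this), zero_div]

theorem cutoffInv_of_add_le (hδ : 0 < δ) (ht : a + δ ≤ t) : cutoffInv a δ t = t⁻¹ := by
  have : 1 ≤ (t - a) / δ := (one_le_div hδ).2 (by linarith)
  rw [cutoffInv, min_eq_left this, max_eq_right zero_le_one, max_eq_left (by linarith), one_div]

theorem cutoffInv_nonneg (ha : 0 < a) : 0 ≤ cutoffInv a δ t :=
  div_nonneg (le_max_left _ _) (ha.le.trans (le_max_right _ _))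

theorem cutoffInv_le_inv_max (ha : 0 < a) : cutoffInv a δ t ≤ (max t a)⁻¹ := by
  rw [cutoffInv, div_eq_mul_inv]
  exact mul_le_of_le_one_left (inv_nonneg.2 (ha.le.trans (le_max_right _ _)))
    (max_le zero_le_one (min_le_left _ _))

theorem cutoffInv_le_indicator (ha : 0 < a) (hδ : 0 ≤ δ) (t : ℝ) :
    cutoffInv a δ t ≤ (Ici a).indicator (·⁻¹) t := by
  by_cases ht : t ∈ Ici a
  · rw [indicator_of_mem ht]
    simpa [max_eq_left (mem_Ici.1 ht)] using cutoffInv_le_inv_max (δ := δ) (t := t) ha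
  · rw [indicator_of_notMem ht, cutoffInv_of_le hδ (not_le.1 ht).le]

theorem indicator_le_cutoffInv (ha : 0 < a) (hδ : 0 < δ) (t : ℝ) :
    (Ici (a + δ)).indicator (·⁻¹) t ≤ cutoffInv a δ t := by
  by_cases ht : t ∈ Ici (a + δ)
  · rw [indicator_of_mem ht, cutoffInv_of_add_le hδ ht]
  · rw [indicator_of_notMem ht]
    exact cutoffInv_nonneg ha

theorem abs_integral_cutoffInv_add_log_le (ha : 0 < a) (hδ : 0 < δ) (h1 : a + δ ≤ 1) :
    |(∫ t in (0 : ℝ)..1, cutoffInv a δ t) + Real.log (a + δ)| ≤ δ / a := by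
  have hint : ∀ b c : ℝ, IntervalIntegrable (cutoffInv a δ) MeasureTheory.volume b c :=
    fun b c => (continuous_cutoffInv ha).intervalIntegrable b c
  have hleft : ∫ t in (0 : ℝ)..a, cutoffInv a δ t = 0 := by
    rw [intervalIntegral.integral_congr (g := fun _ => (0 : ℝ)) fun t ht => ?_,
      intervalIntegral.integral_zero]
    rw [uIcc_of_le ha.le] at ht
    exact cutoffInv_of_le hδ.le ht.2
  have hright : ∫ t in (a + δ)..1, cutoffInv a δ t = -Real.log (a + δ) := by
    rw [intervalIntegral.integral_congr (g := fun t => t⁻¹) fun t ht => ?_,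
      integral_inv_of_pos (by linarith) one_pos, one_div, Real.log_inv]
    rw [uIcc_of_le h1] at ht
    exact cutoffInv_of_add_le hδ ht.1
  have hmiddle : |∫ t in a..(a + δ), cutoffInv a δ t| ≤ δ / a := by
    have := intervalIntegral.norm_integral_le_of_norm_le_const (a := a) (b := a + δ)
      (C := a⁻¹) (f := cutoffInv a δ) fun t _ => by
        rw [Real.norm_eq_abs, abs_of_nonneg (cutoffInv_nonneg ha)]
        exact cutoffInv_le_inv_max ha |>.trans (inv_anti₀ ha (le_max_right _ _))
    rwa [Real.norm_eq_abs, add_sub_cancel_left, abs_of_pos hδ, inv_mul_eq_div] at this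
  rw [← intervalIntegral.integral_add_adjacent_intervals (hint 0 a) (hint a 1),
    ← intervalIntegral.integral_add_adjacent_intervals (hint a (a + δ)) (hint (a + δ) 1),
    hleft, hright]
  simpa using hmiddle

theorem tendsto_integral_cutoffInv {a : ℝ → ℝ} {c : ℝ} (hc0 : 0 < c) (hc1 : c < 1)
    (ha : Tendsto a (𝓝[>] 0) (𝓝 c)) :
    Tendsto (fun δ => ∫ t in (0 : ℝ)..1, cutoffInv (a δ) δ t) (𝓝[>] 0) (𝓝 (-Real.log c)) := by
  have hδ : Tendsto (fun δ : ℝ => δ) (𝓝[>] 0) (𝓝 0) := nhdsWithin_le_nhds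
  have haδ : Tendsto (fun δ => a δ + δ) (𝓝[>] 0) (𝓝 c) := by simpa using ha.add hδ
  have herr : Tendsto (fun δ => δ / a δ) (𝓝[>] 0) (𝓝 0) := by
    simpa [div_eq_mul_inv] using hδ.mul (ha.inv₀ hc0.ne')
  refine tendsto_of_tendsto_of_dist (haδ.log hc0.ne').neg
    (squeeze_zero' (.of_forall fun _ => dist_nonneg) ?_ herr)
  filter_upwards [self_mem_nhdsWithin, ha.eventually (lt_mem_nhds hc0),
    haδ.eventually (gt_mem_nhds hc1)] with δ hδ0 ha0 ha1
  rw [dist_comm, Real.dist_eq, sub_neg_eq_add]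
  exact abs_integral_cutoffInv_add_log_le ha0 hδ0 ha1.le

end CutoffInv

noncomputable def weightedLaplace (p : ℕ → ℝ) (g : ℝ → ℝ) (s : ℝ) : ℝ :=
  s * ∑' n : ℕ, p n * Real.exp (-s * n) * g (Real.exp (-s * n))

section WeightedLaplace

variable {p : ℕ → ℝ} {g h : ℝ → ℝ} {s P : ℝ}

theorem exp_neg_mul_natCast_mem_Icc (hs : 0 ≤ s) (n : ℕ) : Real.exp (-s * n) ∈ Icc (0 : ℝ) 1 :=
  ⟨(Real.exp_pos _).le,
    Real.exp_le_one_iff.2 (neg_mul s n ▸ neg_nonpos.2 (mul_nonneg hs n.cast_nonneg))⟩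

theorem summable_weightedLaplace (hsum : Summable fun n : ℕ => p n * Real.exp (-s * n))
    (hs : 0 ≤ s) (hg : ∃ M, ∀ x ∈ Icc (0 : ℝ) 1, ‖g x‖ ≤ M) :
    Summable fun n : ℕ => p n * Real.exp (-s * n) * g (Real.exp (-s * n)) :=
  let ⟨M, hM⟩ := hg
  (hsum.abs.mul_right M).of_norm_bounded fun n => by
    rw [norm_mul, Real.norm_eq_abs]
    exact mul_le_mul_of_nonneg_left (hM _ (exp_neg_mul_natCast_mem_Icc hs n)) (abs_nonneg _)

theorem weightedLaplace_mono (hp : ∀ n, 0 ≤ p n)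
    (hsum : Summable fun n : ℕ => p n * Real.exp (-s * n)) (hs : 0 ≤ s)
    (hg : ∃ M, ∀ x ∈ Icc (0 : ℝ) 1, ‖g x‖ ≤ M) (hh : ∃ M, ∀ x ∈ Icc (0 : ℝ) 1, ‖h x‖ ≤ M)
    (hgh : ∀ x ∈ Icc (0 : ℝ) 1, g x ≤ h x) :
    weightedLaplace p g s ≤ weightedLaplace p h s :=
  mul_le_mul_of_nonneg_left (Summable.tsum_le_tsum (fun n => mul_le_mul_of_nonneg_left
      (hgh _ (exp_neg_mul_natCast_mem_Icc hs n)) (mul_nonneg (hp n) (Real.exp_pos _).le))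
    (summable_weightedLaplace hsum hs hg) (summable_weightedLaplace hsum hs hh)) hs

theorem eventually_weightedLaplace_le (hp : ∀ n, 0 ≤ p n)
    (hsum : ∀ s : ℝ, 0 < s → Summable fun n : ℕ => p n * Real.exp (-s * n))
    (hg : ∃ M, ∀ x ∈ Icc (0 : ℝ) 1, ‖g x‖ ≤ M) (hh : ∃ M, ∀ x ∈ Icc (0 : ℝ) 1, ‖h x‖ ≤ M)
    (hgh : ∀ x ∈ Icc (0 : ℝ) 1, g x ≤ h x) :
    ∀ᶠ s in 𝓝[>] 0, weightedLaplace p g s ≤ weightedLaplace p h s :=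
  eventually_nhdsWithin_of_forall fun s hs => weightedLaplace_mono hp (hsum s hs) hs.le hg hh hgh

theorem weightedLaplace_add (hsum : Summable fun n : ℕ => p n * Real.exp (-s * n))
    (hs : 0 ≤ s) (hg : ∃ M, ∀ x ∈ Icc (0 : ℝ) 1, ‖g x‖ ≤ M)
    (hh : ∃ M, ∀ x ∈ Icc (0 : ℝ) 1, ‖h x‖ ≤ M) :
    weightedLaplace p (fun x => g x + h x) s = weightedLaplace p g s + weightedLaplace p h s := by
  simp only [weightedLaplace, ← mul_add,
    ← (summable_weightedLaplace hsum hs hg).tsum_add (summable_weightedLaplace hsum hs hh)]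

theorem weightedLaplace_const_mul (a : ℝ) :
    weightedLaplace p (fun x => a * g x) = fun s => a * weightedLaplace p g s := by
  funext s
  simp only [weightedLaplace, mul_left_comm a, ← tsum_mul_left]

theorem weightedLaplace_pow (k : ℕ) (s : ℝ) :
    weightedLaplace p (· ^ k) s = (k + 1 : ℝ)⁻¹ * weightedLaplace p 1 ((k + 1) * s) := by
  have hk : (k + 1 : ℝ) ≠ 0 := k.cast_add_one_ne_zero
  have hexp : ∀ n : ℕ,
      Real.exp (-s * n) * Real.exp (-s * n) ^ k = Real.exp (-((k + 1) * s) * n) := by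
    intro n
    rw [← Real.exp_nat_mul, ← Real.exp_add]
    ring_nf
  simp only [weightedLaplace, Pi.one_apply, mul_one, mul_assoc, hexp]
  rw [inv_mul_cancel_left₀ hk]

theorem tendsto_weightedLaplace_pow (h1 : Tendsto (weightedLaplace p 1) (𝓝[>] 0) (𝓝 P)) (k : ℕ) :
    Tendsto (weightedLaplace p (· ^ k)) (𝓝[>] 0) (𝓝 (P * ∫ t in (0 : ℝ)..1, t ^ k)) := by
  have hk : (0 : ℝ) < k + 1 := k.cast_add_one_pos
  have hscale : Tendsto (fun s : ℝ => (k + 1 : ℝ) * s) (𝓝[>] 0) (𝓝[>] 0) :=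
    tendsto_nhdsWithin_of_tendsto_nhds_of_eventually_within _
      ((continuous_const_mul _).tendsto' 0 0 (mul_zero _) |>.mono_left nhdsWithin_le_nhds)
      (eventually_nhdsWithin_of_forall fun s hs => mul_pos hk hs)
  have hlim : P * ((1 ^ (k + 1) - 0 ^ (k + 1)) / (k + 1)) = (k + 1 : ℝ)⁻¹ * P := by
    rw [one_pow, zero_pow k.succ_ne_zero, sub_zero, one_div, mul_comm]
  rw [integral_pow, hlim, funext (weightedLaplace_pow k)]
  exact (h1.comp hscale).const_mul _

theorem tendsto_weightedLaplace_polynomial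
    (hsum : ∀ s : ℝ, 0 < s → Summable fun n : ℕ => p n * Real.exp (-s * n))
    (h1 : Tendsto (weightedLaplace p 1) (𝓝[>] 0) (𝓝 P)) (q : ℝ[X]) :
    Tendsto (weightedLaplace p q.eval) (𝓝[>] 0) (𝓝 (P * ∫ t in (0 : ℝ)..1, q.eval t)) := by
  induction q using Polynomial.induction_on' with
  | add q r hq hr =>
    have hadd : ∀ᶠ s in 𝓝[>] 0,
        weightedLaplace p q.eval s + weightedLaplace p r.eval s =
          weightedLaplace p (q + r).eval s := by
      filter_upwards [self_mem_nhdsWithin] with s hs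
      simp only [eval_add]
      exact (weightedLaplace_add (hsum s hs) hs.le
        (isCompact_Icc.exists_bound_of_continuousOn q.continuousOn)
        (isCompact_Icc.exists_bound_of_continuousOn r.continuousOn)).symm
    have hint : ∫ t in (0 : ℝ)..1, (q + r).eval t
        = (∫ t in (0 : ℝ)..1, q.eval t) + ∫ t in (0 : ℝ)..1, r.eval t := by
      simp only [eval_add]
      exact intervalIntegral.integral_add (q.continuous.intervalIntegrable _ _)
        (r.continuous.intervalIntegrable _ _)
    rw [hint, mul_add]
    exact (hq.add hr).congr' hadd
  | monomial k a =>
    simp only [eval_monomial, weightedLaplace_const_mul, intervalIntegral.integral_const_mul,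
      mul_left_comm P a]
    exact (tendsto_weightedLaplace_pow h1 k).const_mul a

theorem tendsto_weightedLaplace_of_continuousOn (hp : ∀ n, 0 ≤ p n)
    (hsum : ∀ s : ℝ, 0 < s → Summable fun n : ℕ => p n * Real.exp (-s * n))
    (h1 : Tendsto (weightedLaplace p 1) (𝓝[>] 0) (𝓝 P)) (hg : ContinuousOn g (Icc 0 1)) :
    Tendsto (weightedLaplace p g) (𝓝[>] 0) (𝓝 (P * ∫ t in (0 : ℝ)..1, g t)) := by
  set η : ℕ → ℝ := fun k => 1 / (k + 1)
  have hη : Tendsto η atTop (𝓝 0) := tendsto_one_div_add_atTop_nhds_zero_nat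
  choose q hq using fun k =>
    exists_polynomial_near_of_continuousOn 0 1 g hg (η k) Nat.one_div_pos_of_nat
  have hq_int : Tendsto (fun k => ∫ t in (0 : ℝ)..1, (q k).eval t) atTop
      (𝓝 (∫ t in (0 : ℝ)..1, g t)) := by
    refine TendstoUniformlyOn.tendsto_intervalIntegral_of_continuousOn
      (.of_forall fun k => (q k).continuousOn) (Metric.tendstoUniformlyOn_iff.2 fun ε hε => ?_)
    filter_upwards [hη.eventually (gt_mem_nhds hε)] with k hk x hx
    rw [uIcc_of_le zero_le_one] at hx
    rw [Real.dist_eq, abs_sub_comm]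
    exact (hq k x hx).trans hk
  have hint_add_C : ∀ (r : ℝ[X]) (c : ℝ),
      ∫ t in (0 : ℝ)..1, (r + C c).eval t = (∫ t in (0 : ℝ)..1, r.eval t) + c := by
    intro r c
    simp [intervalIntegral.integral_add (r.continuous.intervalIntegrable _ _)]
  have hlim : ∀ σ : ℝ, Tendsto (fun k => P * ∫ t in (0 : ℝ)..1, (q k + C (σ * η k)).eval t) atTop
      (𝓝 (P * ∫ t in (0 : ℝ)..1, g t)) := by
    intro σ
    simp only [hint_add_C]
    simpa using (hq_int.add (hη.const_mul σ)).const_mul P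
  have hbdd : ∀ r : ℝ[X], ∃ M, ∀ x ∈ Icc (0 : ℝ) 1, ‖r.eval x‖ ≤ M :=
    fun r => isCompact_Icc.exists_bound_of_continuousOn r.continuousOn
  have hg_bdd := isCompact_Icc.exists_bound_of_continuousOn hg
  refine tendsto_of_squeeze_family
    (.of_forall fun k => tendsto_weightedLaplace_polynomial hsum h1 (q k + C (-1 * η k)))
    (.of_forall fun k => tendsto_weightedLaplace_polynomial hsum h1 (q k + C (1 * η k)))
    (hlim (-1)) (hlim 1)
    (.of_forall fun k => eventually_weightedLaplace_le hp hsum (hbdd _) hg_bdd fun x hx => ?_)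
    (.of_forall fun k => eventually_weightedLaplace_le hp hsum hg_bdd (hbdd _) fun x hx => ?_)
  all_goals
    have := abs_lt.1 (hq k x hx)
    simp only [eval_add, eval_C]
    linarith

theorem tendsto_weightedLaplace_indicator_inv (hp : ∀ n, 0 ≤ p n)
    (hsum : ∀ s : ℝ, 0 < s → Summable fun n : ℕ => p n * Real.exp (-s * n))
    (h1 : Tendsto (weightedLaplace p 1) (𝓝[>] 0) (𝓝 P)) {c : ℝ} (hc0 : 0 < c) (hc1 : c < 1) :
    Tendsto (weightedLaplace p ((Ici c).indicator (·⁻¹))) (𝓝[>] 0) (𝓝 (P * -Real.log c)) := by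
  have hind_bdd : ∃ M, ∀ x ∈ Icc (0 : ℝ) 1, ‖(Ici c).indicator (·⁻¹) x‖ ≤ M :=
    ⟨c⁻¹, fun x _ => norm_indicator_Ici_inv_le hc0 x⟩
  have hcutoff_bdd : ∀ {a δ : ℝ}, 0 < a → ∃ M, ∀ x ∈ Icc (0 : ℝ) 1, ‖cutoffInv a δ x‖ ≤ M :=
    fun ha => isCompact_Icc.exists_bound_of_continuousOn (continuous_cutoffInv ha).continuousOn
  have hsmall : ∀ᶠ δ in 𝓝[>] (0 : ℝ), δ ∈ Ioo 0 c := Ioo_mem_nhdsGT hc0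
  have hshift : Tendsto (fun δ => c - δ) (𝓝[>] 0) (𝓝 c) := by
    simpa using tendsto_const_nhds.sub (tendsto_id.mono_left (nhdsWithin_le_nhds (a := (0 : ℝ))))
  refine tendsto_of_squeeze_family
    (.of_forall fun δ => tendsto_weightedLaplace_of_continuousOn hp hsum h1
      (continuous_cutoffInv (δ := δ) hc0).continuousOn)
    (hsmall.mono fun δ hδ => tendsto_weightedLaplace_of_continuousOn hp hsum h1
      (continuous_cutoffInv (δ := δ) (sub_pos.2 hδ.2)).continuousOn)
    ((tendsto_integral_cutoffInv hc0 hc1 tendsto_const_nhds).const_mul P)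
    ((tendsto_integral_cutoffInv hc0 hc1 hshift).const_mul P)
    (hsmall.mono fun δ hδ => eventually_weightedLaplace_le hp hsum (hcutoff_bdd hc0) hind_bdd
      fun t _ => cutoffInv_le_indicator hc0 hδ.1.le t)
    (hsmall.mono fun δ hδ => eventually_weightedLaplace_le hp hsum hind_bdd
      (hcutoff_bdd (sub_pos.2 hδ.2)) fun t _ => ?_)
  simpa using indicator_le_cutoffInv (sub_pos.2 hδ.2) hδ.1 t

theorem weightedLaplace_indicator_inv_natCast_inv {n : ℕ} (hn : n ≠ 0) :
    weightedLaplace p ((Ici (Real.exp (-1))).indicator (·⁻¹)) (n : ℝ)⁻¹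
      = (∑ j ∈ Finset.range (n + 1), p j) / n := by
  have hn' : (0 : ℝ) < n := Nat.cast_pos.2 (Nat.pos_of_ne_zero hn)
  have hmem : ∀ j : ℕ,
      Real.exp (-(n : ℝ)⁻¹ * j) ∈ Ici (Real.exp (-1)) ↔ j ∈ Finset.range (n + 1) := by
    intro j
    rw [mem_Ici, Real.exp_le_exp, Finset.mem_range, Nat.lt_succ_iff, neg_mul, neg_le_neg_iff,
      inv_mul_le_one₀ hn', Nat.cast_le]
  rw [weightedLaplace, tsum_eq_sum (s := Finset.range (n + 1)) fun j hj => by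
    rw [indicator_of_notMem (mt (hmem j).1 hj), mul_zero], inv_mul_eq_div]
  congr 1
  refine Finset.sum_congr rfl fun j hj => ?_
  rw [indicator_of_mem ((hmem j).2 hj), mul_assoc, mul_inv_cancel₀ (Real.exp_pos _).ne', mul_one]

end WeightedLaplace

theorem tauberian_cesaro_general (p : ℕ → ℝ) (hnonneg : ∀ n, 0 ≤ p n) (P : ℝ)
    (hsummable : ∀ s : ℝ, 0 < s → Summable (fun n : ℕ => p n * Real.exp (-s * n)))
    (hLaplace :
      Tendsto (fun s : ℝ => s * ∑' n : ℕ, p n * Real.exp (-s * n))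
        (nhdsWithin 0 (Ioi 0)) (nhds P)) :
    Tendsto (fun n : ℕ => (∑ j ∈ Finset.range (n + 1), p j) / n) atTop (nhds P) := by
  have h1 : Tendsto (weightedLaplace p 1) (𝓝[>] 0) (𝓝 P) := by
    convert hLaplace using 2 with s
    simp [weightedLaplace]
  have hind := tendsto_weightedLaplace_indicator_inv hnonneg hsummable h1 (Real.exp_pos (-1))
    (Real.exp_lt_one_iff.2 neg_one_lt_zero)
  rw [Real.log_exp, neg_neg, mul_one] at hind
  refine (hind.comp (tendsto_inv_atTop_nhdsGT_zero.comp tendsto_natCast_atTop_atTop)).congr' ?_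
  filter_upwards [eventually_ne_atTop 0] with n hn
  exact weightedLaplace_indicator_inv_natCast_inv hn

theorem tauberian_cesaro (p : ℕ → ℝ) (hnonneg : ∀ n, 0 ≤ p n) (P : ℝ) (hP : 0 < P)
    (hsummable : ∀ s : ℝ, 0 < s → Summable (fun n : ℕ => p n * Real.exp (-s * n)))
    (hLaplace :
      Tendsto (fun s : ℝ => s * ∑' n : ℕ, p n * Real.exp (-s * n))
        (nhdsWithin 0 (Ioi 0)) (nhds P)) :
    Tendsto (fun n : ℕ => (∑ j ∈ Finset.range (n + 1), p j) / n) atTop (nhds P) :=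
  tauberian_cesaro_general p hnonneg P hsummable hLaplace
end
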